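/- In the Chevalley–Eilenberg complex above, the 5-forms ω₁²∧αᵢ for i = 1, 2, 3 are all exact: there exist 4-forms βᵢ with dβᵢ = ω₁²∧αᵢ, where ω₁ = α₁α₆ + α₂α₅ - α₃α₄. -/
import Mathlib

/-- The generators `α₁,…,α₆` (0-indexed) of the exterior algebra `Λ(α₁,…,α₆)`. -/
noncomputable def genCE (i : Fin 6) : ExteriorAlgebra ℝ (Fin 6 → ℝ) :=
  ExteriorAlgebra.ι ℝ (Pi.single i 1)

private lemma gswap (i j : Fin 6) : genCE j * genCE i = -(genCE i * genCE j) :=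
  eq_neg_of_add_eq_zero_left (ExteriorAlgebra.ι_add_mul_swap _ _)

private lemma gsq (i : Fin 6) : genCE i * genCE i = 0 :=
  ExteriorAlgebra.ι_sq_zero _

private lemma gswap' (i j : Fin 6) (x : ExteriorAlgebra ℝ (Fin 6 → ℝ)) :
    genCE j * (genCE i * x) = -(genCE i * (genCE j * x)) := by
  rw [← mul_assoc, gswap, neg_mul, mul_assoc]

private lemma gsq' (i : Fin 6) (x : ExteriorAlgebra ℝ (Fin 6 → ℝ)) :
    genCE i * (genCE i * x) = 0 := by rw [← mul_assoc, gsq, zero_mul]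

private lemma s10 : genCE 1 * genCE 0 = -(genCE 0 * genCE 1) := gswap 0 1
private lemma s10a (x : ExteriorAlgebra ℝ (Fin 6 → ℝ)) : genCE 1 * (genCE 0 * x) = -(genCE 0 * (genCE 1 * x)) := gswap' 0 1 x
private lemma s20 : genCE 2 * genCE 0 = -(genCE 0 * genCE 2) := gswap 0 2
private lemma s20a (x : ExteriorAlgebra ℝ (Fin 6 → ℝ)) : genCE 2 * (genCE 0 * x) = -(genCE 0 * (genCE 2 * x)) := gswap' 0 2 x
private lemma s30 : genCE 3 * genCE 0 = -(genCE 0 * genCE 3) := gswap 0 3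
private lemma s30a (x : ExteriorAlgebra ℝ (Fin 6 → ℝ)) : genCE 3 * (genCE 0 * x) = -(genCE 0 * (genCE 3 * x)) := gswap' 0 3 x
private lemma s40 : genCE 4 * genCE 0 = -(genCE 0 * genCE 4) := gswap 0 4
private lemma s40a (x : ExteriorAlgebra ℝ (Fin 6 → ℝ)) : genCE 4 * (genCE 0 * x) = -(genCE 0 * (genCE 4 * x)) := gswap' 0 4 x
private lemma s50 : genCE 5 * genCE 0 = -(genCE 0 * genCE 5) := gswap 0 5
private lemma s50a (x : ExteriorAlgebra ℝ (Fin 6 → ℝ)) : genCE 5 * (genCE 0 * x) = -(genCE 0 * (genCE 5 * x)) := gswap' 0 5 x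
private lemma s21 : genCE 2 * genCE 1 = -(genCE 1 * genCE 2) := gswap 1 2
private lemma s21a (x : ExteriorAlgebra ℝ (Fin 6 → ℝ)) : genCE 2 * (genCE 1 * x) = -(genCE 1 * (genCE 2 * x)) := gswap' 1 2 x
private lemma s31 : genCE 3 * genCE 1 = -(genCE 1 * genCE 3) := gswap 1 3
private lemma s31a (x : ExteriorAlgebra ℝ (Fin 6 → ℝ)) : genCE 3 * (genCE 1 * x) = -(genCE 1 * (genCE 3 * x)) := gswap' 1 3 x
private lemma s41 : genCE 4 * genCE 1 = -(genCE 1 * genCE 4) := gswap 1 4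
private lemma s41a (x : ExteriorAlgebra ℝ (Fin 6 → ℝ)) : genCE 4 * (genCE 1 * x) = -(genCE 1 * (genCE 4 * x)) := gswap' 1 4 x
private lemma s51 : genCE 5 * genCE 1 = -(genCE 1 * genCE 5) := gswap 1 5
private lemma s51a (x : ExteriorAlgebra ℝ (Fin 6 → ℝ)) : genCE 5 * (genCE 1 * x) = -(genCE 1 * (genCE 5 * x)) := gswap' 1 5 x
private lemma s32 : genCE 3 * genCE 2 = -(genCE 2 * genCE 3) := gswap 2 3
private lemma s32a (x : ExteriorAlgebra ℝ (Fin 6 → ℝ)) : genCE 3 * (genCE 2 * x) = -(genCE 2 * (genCE 3 * x)) := gswap' 2 3 x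
private lemma s42 : genCE 4 * genCE 2 = -(genCE 2 * genCE 4) := gswap 2 4
private lemma s42a (x : ExteriorAlgebra ℝ (Fin 6 → ℝ)) : genCE 4 * (genCE 2 * x) = -(genCE 2 * (genCE 4 * x)) := gswap' 2 4 x
private lemma s52 : genCE 5 * genCE 2 = -(genCE 2 * genCE 5) := gswap 2 5
private lemma s52a (x : ExteriorAlgebra ℝ (Fin 6 → ℝ)) : genCE 5 * (genCE 2 * x) = -(genCE 2 * (genCE 5 * x)) := gswap' 2 5 x
private lemma s43 : genCE 4 * genCE 3 = -(genCE 3 * genCE 4) := gswap 3 4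
private lemma s43a (x : ExteriorAlgebra ℝ (Fin 6 → ℝ)) : genCE 4 * (genCE 3 * x) = -(genCE 3 * (genCE 4 * x)) := gswap' 3 4 x
private lemma s53 : genCE 5 * genCE 3 = -(genCE 3 * genCE 5) := gswap 3 5
private lemma s53a (x : ExteriorAlgebra ℝ (Fin 6 → ℝ)) : genCE 5 * (genCE 3 * x) = -(genCE 3 * (genCE 5 * x)) := gswap' 3 5 x
private lemma s54 : genCE 5 * genCE 4 = -(genCE 4 * genCE 5) := gswap 4 5
private lemma s54a (x : ExteriorAlgebra ℝ (Fin 6 → ℝ)) : genCE 5 * (genCE 4 * x) = -(genCE 4 * (genCE 5 * x)) := gswap' 4 5 x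
private lemma q0 : genCE 0 * genCE 0 = 0 := gsq 0
private lemma q0a (x : ExteriorAlgebra ℝ (Fin 6 → ℝ)) : genCE 0 * (genCE 0 * x) = 0 := gsq' 0 x
private lemma q1 : genCE 1 * genCE 1 = 0 := gsq 1
private lemma q1a (x : ExteriorAlgebra ℝ (Fin 6 → ℝ)) : genCE 1 * (genCE 1 * x) = 0 := gsq' 1 x
private lemma q2 : genCE 2 * genCE 2 = 0 := gsq 2
private lemma q2a (x : ExteriorAlgebra ℝ (Fin 6 → ℝ)) : genCE 2 * (genCE 2 * x) = 0 := gsq' 2 x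
private lemma q3 : genCE 3 * genCE 3 = 0 := gsq 3
private lemma q3a (x : ExteriorAlgebra ℝ (Fin 6 → ℝ)) : genCE 3 * (genCE 3 * x) = 0 := gsq' 3 x
private lemma q4 : genCE 4 * genCE 4 = 0 := gsq 4
private lemma q4a (x : ExteriorAlgebra ℝ (Fin 6 → ℝ)) : genCE 4 * (genCE 4 * x) = 0 := gsq' 4 x
private lemma q5 : genCE 5 * genCE 5 = 0 := gsq 5
private lemma q5a (x : ExteriorAlgebra ℝ (Fin 6 → ℝ)) : genCE 5 * (genCE 5 * x) = 0 := gsq' 5 x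

/-- With `ω₁ = α₁α₆ + α₂α₅ - α₃α₄`, the 5-forms `ω₁² ∧ αᵢ` for `i = 1,2,3`
are all exact in the Chevalley–Eilenberg complex. -/
theorem omega1_sq_times_alpha_exact
    (d : ExteriorAlgebra ℝ (Fin 6 → ℝ) →ₗ[ℝ] ExteriorAlgebra ℝ (Fin 6 → ℝ))
    (hone : d 1 = 0)
    (hleib : ∀ (v : Fin 6 → ℝ) (y : ExteriorAlgebra ℝ (Fin 6 → ℝ)),
      d (ExteriorAlgebra.ι ℝ v * y)
        = d (ExteriorAlgebra.ι ℝ v) * y - ExteriorAlgebra.ι ℝ v * d y)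
    (h1 : d (genCE 0) = 0) (h2 : d (genCE 1) = 0) (h3 : d (genCE 2) = 0)
    (h4 : d (genCE 3) = genCE 0 * genCE 1)
    (h5 : d (genCE 4) = genCE 0 * genCE 3)
    (h6 : d (genCE 5) = genCE 0 * genCE 4 + genCE 1 * genCE 2 + genCE 1 * genCE 3) :
    (∃ β, d β = (genCE 0 * genCE 5 + genCE 1 * genCE 4 - genCE 2 * genCE 3) ^ 2 * genCE 0) ∧
    (∃ β, d β = (genCE 0 * genCE 5 + genCE 1 * genCE 4 - genCE 2 * genCE 3) ^ 2 * genCE 1) ∧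
    (∃ β, d β = (genCE 0 * genCE 5 + genCE 1 * genCE 4 - genCE 2 * genCE 3) ^ 2 * genCE 2) := by
  have hd : ∀ (i : Fin 6) (y : ExteriorAlgebra ℝ (Fin 6 → ℝ)),
      d (genCE i * y) = d (genCE i) * y - genCE i * d y := fun i y => hleib (Pi.single i 1) y
  refine ⟨⟨-(genCE 0 * (genCE 2 * (genCE 4 * genCE 5)) + genCE 0 * (genCE 2 * (genCE 4 * genCE 5))), ?_⟩, ⟨genCE 1 * (genCE 2 * (genCE 4 * genCE 5)) + genCE 1 * (genCE 2 * (genCE 4 * genCE 5)), ?_⟩, ⟨-(genCE 2 * (genCE 3 * (genCE 4 * genCE 5)) + genCE 2 * (genCE 3 * (genCE 4 * genCE 5))), ?_⟩⟩ <;>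
    · simp only [hd, h1, h2, h3, h4, h5, h6, map_neg, map_add, mul_assoc, mul_add, add_mul, mul_sub, sub_mul, mul_neg, neg_mul, mul_one, one_mul, mul_zero, zero_mul, sub_eq_add_neg, pow_two, neg_neg, neg_add, s10, s10a, s20, s20a, s30, s30a, s40, s40a, s50, s50a, s21, s21a, s31, s31a, s41, s41a, s51, s51a, s32, s32a, s42, s42a, s52, s52a, s43, s43a, s53, s53a, s54, s54a, q0, q0a, q1, q1a, q2, q2a, q3, q3a, q4, q4a, q5, q5a]
      abel
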